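/- Let p ≥ 3 be an integer, C₁ > 0, and let v be an L-periodic arc-length curve of class C³. Then there exists a constant C > 0 (depending only on v, p, C₁) with the following property: for every sequence s : ℤ → ℝ, all i, K ∈ ℤ with 2i ≤ K ≤ 2i + p + 2, and all ξ, s̄, d ∈ ℝ such that (a) v(s̄) = (S_p(v∘s))_K + d·n(ξ), (b) |ξ − s_k| ≤ C₁·h for every k with i ≤ k ≤ i + p + 1, and (c) |s̄ − ξ| ≤ C₁·h, where h := max_{i ≤ l ≤ i+p} |s_{l+1} − s_l|, one has |s̄ − (S_p s)_K| ≤ C·h³. -/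

import Mathlib

/-- The Lane–Riesenfeld (B-spline) subdivision operator `S p`, acting on sequences with
values in a real vector space (componentwise averaging). -/
noncomputable def S {E : Type*} [AddCommGroup E] [Module ℝ E] : ℕ → (ℤ → E) → ℤ → E
  | 0, x, i => x (Int.fdiv i 2)
  | p + 1, x, i => (2⁻¹ : ℝ) • (S p x i + S p x (i + 1))

/-- Euclidean scalar product on `ℝ²`. -/
noncomputable def dot (u w : ℝ × ℝ) : ℝ := u.1 * w.1 + u.2 * w.2

/-- Rotation by 90°: `u^⊥ = (−u₂, u₁)`. -/
def perp (u : ℝ × ℝ) : ℝ × ℝ := (-u.2, u.1)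

/-!
Pair the relation `v s̄ = (S_p (v ∘ s))_K + d • n(ξ)` with the unit tangent `u = v'(ξ)`: the normal
term drops out, and since `S_p` commutes with linear maps, `(S_p s)_K - s̄` is the `S_p`-average of
`g(s_k) - g(s̄)` for `g t = t - ⟪v t, u⟫`. Arc length makes `g` flat to second order at `ξ`:
`g'(ξ) = 1 - |v'(ξ)|² = 0` and `g''(ξ) = -⟪v''(ξ), v'(ξ)⟫ = 0`, while `g'''` is bounded uniformly
in `ξ` because `v'''` is continuous and periodic. Hence `|g t - g ξ| = O(|t - ξ|³)`, and `S_p`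
averages values at parameters within `C₁ h` of `ξ` without increasing their size.
-/

section Subdivision

variable {E F : Type*} [AddCommGroup E] [Module ℝ E] [AddCommGroup F] [Module ℝ F]

theorem S_comp_linearMap (f : E →ₗ[ℝ] F) (p : ℕ) (x : ℤ → E) (K : ℤ) :
    S p (fun k => f (x k)) K = f (S p x K) := by
  induction p generalizing K with
  | zero => rfl
  | succ p ih => simp only [S, ih, map_add, map_smul]

theorem S_sub (p : ℕ) (x y : ℤ → E) (K : ℤ) :
    S p (fun k => x k - y k) K = S p x K - S p y K := by
  induction p generalizing K with
  | zero => rfl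
  | succ p ih =>
    simp only [S, ih, ← smul_sub]
    congr 1
    abel

end Subdivision

theorem norm_S_sub_le {E : Type*} [SeminormedAddCommGroup E] [NormedSpace ℝ E] {p : ℕ}
    {x : ℤ → E} {K : ℤ} {c : E} {B : ℝ}
    (hx : ∀ j, K ≤ j → j ≤ K + p → ‖x (j.fdiv 2) - c‖ ≤ B) : ‖S p x K - c‖ ≤ B := by
  induction p generalizing K with
  | zero => simpa [S] using hx K le_rfl (by omega)
  | succ p ih =>
    have h₀ := ih fun j hj hj' => hx j hj (by omega)
    have h₁ := ih (K := K + 1) fun j hj hj' => hx j (by omega) (by omega)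
    have hsplit : S (p + 1) x K - c = (2⁻¹ : ℝ) • ((S p x K - c) + (S p x (K + 1) - c)) := by
      simp only [S, smul_add, smul_sub]
      module
    calc ‖S (p + 1) x K - c‖ ≤ 2⁻¹ * (‖S p x K - c‖ + ‖S p x (K + 1) - c‖) := by
          rw [hsplit, norm_smul, Real.norm_of_nonneg (by norm_num)]
          gcongr
          exact norm_add_le _ _
      _ ≤ B := by linarith

noncomputable def dotₗ (u : ℝ × ℝ) : ℝ × ℝ →ₗ[ℝ] ℝ where
  toFun w := dot w u
  map_add' _ _ := by simp only [dot, Prod.fst_add, Prod.snd_add]; ring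
  map_smul' _ _ := by
    simp only [dot, Prod.smul_fst, Prod.smul_snd, smul_eq_mul, RingHom.id_apply]
    ring

theorem dot_add_smul_perp_self (w u : ℝ × ℝ) (d : ℝ) : dot (w + d • perp u) u = dot w u := by
  simp only [dot, perp, Prod.fst_add, Prod.snd_add, Prod.smul_fst, Prod.smul_snd, smul_eq_mul]
  ring

theorem S_sub_eq_of_eq_add_smul_perp {p : ℕ} {v : ℝ → ℝ × ℝ} {s : ℤ → ℝ} {K : ℤ} {sb d : ℝ}
    {u : ℝ × ℝ} (hsb : v sb = S p (fun k => v (s k)) K + d • perp u) :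
    S p s K - sb = S p (fun k => s k - dot (v (s k)) u) K - (sb - dot (v sb) u) := by
  have hdot : S p (fun k => dot (v (s k)) u) K = dot (v sb) u := by
    rw [hsb, dot_add_smul_perp_self]
    exact S_comp_linearMap (dotₗ u) p _ K
  rw [S_sub p s, hdot]
  ring

theorem abs_dot_le (w u : ℝ × ℝ) : |dot w u| ≤ 2 * ‖w‖ * ‖u‖ := by
  have h₁ : |w.1| * |u.1| ≤ ‖w‖ * ‖u‖ :=
    mul_le_mul (norm_fst_le w) (norm_fst_le u) (abs_nonneg _) (norm_nonneg _)
  have h₂ : |w.2| * |u.2| ≤ ‖w‖ * ‖u‖ :=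
    mul_le_mul (norm_snd_le w) (norm_snd_le u) (abs_nonneg _) (norm_nonneg _)
  calc |dot w u| ≤ |w.1| * |u.1| + |w.2| * |u.2| := by
        rw [dot, ← abs_mul, ← abs_mul]; exact abs_add_le _ _
    _ ≤ 2 * ‖w‖ * ‖u‖ := by linarith

theorem norm_le_one_of_dot_self_eq_one {u : ℝ × ℝ} (hu : dot u u = 1) : ‖u‖ ≤ 1 := by
  rw [dot] at hu
  rw [Prod.norm_def, max_le_iff, Real.norm_eq_abs, Real.norm_eq_abs, abs_le_one_iff_mul_self_le_one,
    abs_le_one_iff_mul_self_le_one]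
  constructor <;> nlinarith [mul_self_nonneg u.1, mul_self_nonneg u.2]

theorem hasDerivAt_dot {w z : ℝ → ℝ × ℝ} {w' z' : ℝ × ℝ} {t : ℝ} (hw : HasDerivAt w w' t)
    (hz : HasDerivAt z z' t) :
    HasDerivAt (fun τ => dot (w τ) (z τ)) (dot w' (z t) + dot (w t) z') t := by
  have hw₁ : HasDerivAt (fun τ => (w τ).1) w'.1 t :=
    (hasFDerivAt_fst (p := w t)).comp_hasDerivAt t hw
  have hw₂ : HasDerivAt (fun τ => (w τ).2) w'.2 t :=
    (hasFDerivAt_snd (p := w t)).comp_hasDerivAt t hw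
  have hz₁ : HasDerivAt (fun τ => (z τ).1) z'.1 t :=
    (hasFDerivAt_fst (p := z t)).comp_hasDerivAt t hz
  have hz₂ : HasDerivAt (fun τ => (z τ).2) z'.2 t :=
    (hasFDerivAt_snd (p := z t)).comp_hasDerivAt t hz
  show HasDerivAt (fun τ => (w τ).1 * (z τ).1 + (w τ).2 * (z τ).2) _ t
  exact ((hw₁.mul hz₁).add (hw₂.mul hz₂)).congr_deriv (by simp only [dot]; ring)

theorem hasDerivAt_dot_const {w : ℝ → ℝ × ℝ} {w' : ℝ × ℝ} {t : ℝ} (hw : HasDerivAt w w' t)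
    (u : ℝ × ℝ) : HasDerivAt (fun τ => dot (w τ) u) (dot w' u) t := by
  simpa [dot] using hasDerivAt_dot hw (hasDerivAt_const t u)

theorem dot_eq_zero_of_hasDerivAt_of_dot_self_eq {w : ℝ → ℝ × ℝ} {w' : ℝ × ℝ} {t c : ℝ}
    (hw : HasDerivAt w w' t) (hc : ∀ τ, dot (w τ) (w τ) = c) : dot w' (w t) = 0 := by
  have h := (hasDerivAt_dot hw hw).unique (by simpa only [hc] using hasDerivAt_const t c)
  simp only [dot] at h ⊢
  linarith

theorem abs_sub_le_mul_abs_sub_pow_succ {f f' : ℝ → ℝ} {ξ M : ℝ} {n : ℕ}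
    (hf : ∀ t, HasDerivAt f (f' t) t) (hM : 0 ≤ M) (hf' : ∀ t, |f' t| ≤ M * |t - ξ| ^ n)
    (t : ℝ) : |f t - f ξ| ≤ M * |t - ξ| ^ (n + 1) := by
  have hbound : ∀ τ ∈ Set.uIcc ξ t, ‖f' τ‖ ≤ M * |t - ξ| ^ n := fun τ hτ =>
    (hf' τ).trans (mul_le_mul_of_nonneg_left
      (pow_le_pow_left₀ (abs_nonneg _) (Set.abs_sub_left_of_mem_uIcc hτ) n) hM)
  have := (convex_uIcc ξ t).norm_image_sub_le_of_norm_hasDerivWithin_le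
    (fun τ _ => (hf τ).hasDerivWithinAt) hbound Set.left_mem_uIcc Set.right_mem_uIcc
  rwa [Real.norm_eq_abs, Real.norm_eq_abs, mul_assoc, ← pow_succ] at this

theorem abs_sub_le_mul_abs_sub_pow_three {f f₁ f₂ f₃ : ℝ → ℝ} {ξ M : ℝ}
    (hf : ∀ t, HasDerivAt f (f₁ t) t) (hf₁ : ∀ t, HasDerivAt f₁ (f₂ t) t)
    (hf₂ : ∀ t, HasDerivAt f₂ (f₃ t) t) (h₁ : f₁ ξ = 0) (h₂ : f₂ ξ = 0)
    (hf₃ : ∀ t, |f₃ t| ≤ M) (t : ℝ) : |f t - f ξ| ≤ M * |t - ξ| ^ 3 := by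
  have hM : 0 ≤ M := (abs_nonneg _).trans (hf₃ ξ)
  have hb₂ : ∀ t, |f₂ t| ≤ M * |t - ξ| ^ 1 := fun t => by
    simpa [h₂] using abs_sub_le_mul_abs_sub_pow_succ (ξ := ξ) (n := 0) hf₂ hM (by simpa using hf₃) t
  have hb₁ : ∀ t, |f₁ t| ≤ M * |t - ξ| ^ 2 := fun t => by
    simpa [h₁] using abs_sub_le_mul_abs_sub_pow_succ hf₁ hM hb₂ t
  exact abs_sub_le_mul_abs_sub_pow_succ hf hM hb₁ t

theorem Function.Periodic.deriv {E : Type*} [NormedAddCommGroup E] [NormedSpace ℝ E]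
    {f : ℝ → E} {c : ℝ} (hf : Periodic f c) : Periodic (_root_.deriv f) c := fun t => by
  rw [← deriv_comp_add_const, funext hf]

theorem Function.Periodic.iteratedDeriv {E : Type*} [NormedAddCommGroup E] [NormedSpace ℝ E]
    {f : ℝ → E} {c : ℝ} (hf : Periodic f c) (n : ℕ) : Periodic (_root_.iteratedDeriv n f) c := by
  induction n with
  | zero => simpa using hf
  | succ n ih => simpa only [iteratedDeriv_succ] using ih.deriv

theorem hasDerivAt_iteratedDeriv {E : Type*} [NormedAddCommGroup E] [NormedSpace ℝ E]
    {f : ℝ → E} {n : WithTop ℕ∞} (hf : ContDiff ℝ n f) {m : ℕ} (hm : m < n) (t : ℝ) :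
    HasDerivAt (iteratedDeriv m f) (iteratedDeriv (m + 1) f t) t := by
  rw [iteratedDeriv_succ]
  exact (hf.differentiable_iteratedDeriv m hm t).hasDerivAt

theorem exists_tangential_deviation_le {L : ℝ} (hL : L ≠ 0) {v : ℝ → ℝ × ℝ}
    (hper : Function.Periodic v L) (hreg : ContDiff ℝ 3 v)
    (hunit : ∀ t, dot (deriv v t) (deriv v t) = 1) :
    ∃ M, 0 ≤ M ∧ ∀ ξ t,
      |(t - dot (v t) (deriv v ξ)) - (ξ - dot (v ξ) (deriv v ξ))| ≤ M * |t - ξ| ^ 3 := by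
  obtain ⟨M, hM⟩ := isBounded_iff_forall_norm_le.mp <|
    (hper.iteratedDeriv 3).isBounded_of_continuous hL (hreg.continuous_iteratedDeriv 3 le_rfl)
  have hM₀ : 0 ≤ M := (norm_nonneg _).trans (hM _ ⟨0, rfl⟩)
  refine ⟨2 * M, by positivity, fun ξ t => ?_⟩
  simp only [← iteratedDeriv_one] at hunit ⊢
  have hder (m : ℕ) (hm : m < 3) := hasDerivAt_iteratedDeriv hreg (mod_cast hm)
  set u := iteratedDeriv 1 v ξ
  refine abs_sub_le_mul_abs_sub_pow_three (f₁ := fun τ => 1 - dot (iteratedDeriv 1 v τ) u)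
    (f₂ := fun τ => -dot (iteratedDeriv 2 v τ) u) (f₃ := fun τ => -dot (iteratedDeriv 3 v τ) u)
    (fun τ => (hasDerivAt_id τ).sub (hasDerivAt_dot_const (hder 0 (by norm_num) τ) u))
    (fun τ => (hasDerivAt_dot_const (hder 1 (by norm_num) τ) u).const_sub 1)
    (fun τ => (hasDerivAt_dot_const (hder 2 (by norm_num) τ) u).neg)
    ?_ ?_ (fun τ => ?_) t
  · show 1 - dot u u = 0
    rw [hunit ξ, sub_self]
  · show -dot (iteratedDeriv 2 v ξ) u = 0
    rw [dot_eq_zero_of_hasDerivAt_of_dot_self_eq (hder 1 (by norm_num) ξ) hunit, neg_zero]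
  · rw [abs_neg]
    calc |dot (iteratedDeriv 3 v τ) u| ≤ 2 * ‖iteratedDeriv 3 v τ‖ * ‖u‖ := abs_dot_le _ _
      _ ≤ 2 * M * 1 := by
        gcongr
        exacts [hM _ ⟨τ, rfl⟩, norm_le_one_of_dot_self_eq_one (hunit ξ)]
      _ = 2 * M := mul_one _

/-- One-step offset bound for the `S_p` normal multiscale transform (`p ≥ 3`, `C³` curve):
if `v(s̄) = (S_p(v∘s))_K + d·n(ξ)` with `ξ`, `s̄` within `C₁·h` of the local parameters,
where `h` is the local mesh size, then `|s̄ − (S_p s)_K| ≤ C·h³`. -/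
theorem offset_third_order (p : ℕ) (C₁ : ℝ)
    (L : ℝ) (hL : 0 < L) (v : ℝ → ℝ × ℝ) (hper : ∀ t, v (t + L) = v t)
    (hreg : ContDiff ℝ 3 v) (hunit : ∀ t, dot (deriv v t) (deriv v t) = 1) :
    ∃ C : ℝ, 0 < C ∧ ∀ (s : ℤ → ℝ) (i K : ℤ), 2 * i ≤ K → K ≤ 2 * i + p + 2 →
      ∀ (ξ sb d h : ℝ),
      h = (Finset.Icc i (i + p)).sup' (Finset.nonempty_Icc.mpr (by omega))
            (fun l => |s (l + 1) - s l|) →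
      v sb = S p (fun k => v (s k)) K + d • perp (deriv v ξ) →
      (∀ k : ℤ, i ≤ k → k ≤ i + p + 1 → |ξ - s k| ≤ C₁ * h) →
      |sb - ξ| ≤ C₁ * h →
      |sb - S p s K| ≤ C * h ^ 3 := by
  obtain ⟨M, hM, hdev⟩ := exists_tangential_deviation_le hL.ne' hper hreg hunit
  refine ⟨2 * M * |C₁| ^ 3 + 1, by positivity, ?_⟩
  intro s i K hiK hKi ξ sb d h hh hsb hs hsbξ
  set g : ℝ → ℝ := fun t => t - dot (v t) (deriv v ξ)
  have hh₀ : 0 ≤ h := hh ▸ Finset.le_sup'_of_le _ (Finset.left_mem_Icc.mpr (by omega))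
    (abs_nonneg (s (i + 1) - s i))
  have hg (t : ℝ) (ht : |t - ξ| ≤ C₁ * h) : |g t - g ξ| ≤ M * |C₁| ^ 3 * h ^ 3 := calc
    |g t - g ξ| ≤ M * |t - ξ| ^ 3 := hdev ξ t
    _ ≤ M * (|C₁| * h) ^ 3 := by
      gcongr
      exact ht.trans (mul_le_mul_of_nonneg_right (le_abs_self C₁) hh₀)
    _ = M * |C₁| ^ 3 * h ^ 3 := by ring
  have hgs (j : ℤ) (hj : K ≤ j) (hj' : j ≤ K + p) :
      ‖g (s (j.fdiv 2)) - g sb‖ ≤ 2 * M * |C₁| ^ 3 * h ^ 3 := by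
    have hk : j.fdiv 2 = j / 2 := Int.fdiv_eq_ediv_of_nonneg j (by norm_num)
    have hsk := hg (s (j.fdiv 2)) ((abs_sub_comm _ _).trans_le (hs _ (by omega) (by omega)))
    have hsb' := hg sb hsbξ
    rw [abs_le] at hsk hsb'
    rw [Real.norm_eq_abs, abs_le]
    constructor <;> linarith
  calc |sb - S p s K| = ‖S p (fun k => g (s k)) K - g sb‖ := by
        rw [← S_sub_eq_of_eq_add_smul_perp hsb, abs_sub_comm, Real.norm_eq_abs]
    _ ≤ 2 * M * |C₁| ^ 3 * h ^ 3 := norm_S_sub_le hgs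
    _ ≤ (2 * M * |C₁| ^ 3 + 1) * h ^ 3 := by
        rw [add_one_mul]
        exact le_add_of_nonneg_right (pow_nonneg hh₀ 3)
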